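/- arXiv:2503.22922 — 4 statements merged into one kernel-verified Lean document; each statement's English description precedes it below -/
import Mathlib

section
/- Let F be a finite set, let 2^F carry the topology generated by the sets B_S = {T | S ⊆ T}, and let W ⊆ 2^F be a subset containing the empty set. Define r : 2^F → W by r(S) = S if S ∈ W, and otherwise r(S) = the element of maximal cardinality in the set {A ∈ W | A ⊆ S}, assuming that for every S ∉ W the set {A ∈ W | A ⊆ S} is totally ordered by inclusion (so has a unique maximum). Then r is continuous and restricts to the identity on W. -/
/-- The topology on the power set of a set `F` generated by the sets
`B_S = {T | S ⊆ T}`. -/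
def hyperTopology (F : Type*) : TopologicalSpace (Set F) :=
  .generateFrom {B | ∃ S : Set F, B = {T : Set F | S ⊆ T}}

/-- Any upper set is open in the hyperTopology. -/
lemma upper_isOpen {F : Type*} (U : Set (Set F))
    (hU : ∀ S ∈ U, ∀ T : Set F, S ⊆ T → T ∈ U) :
    @IsOpen _ (hyperTopology F) U := by
  have : U = ⋃ S ∈ U, {T : Set F | S ⊆ T} := by
    ext T
    simp only [Set.mem_iUnion, Set.mem_setOf_eq]
    exact ⟨fun h => ⟨T, h, subset_rfl⟩, fun ⟨S, hS, hST⟩ => hU S hS T hST⟩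
  rw [this]
  exact @isOpen_biUnion _ _ (hyperTopology F) _ _ fun S _ =>
    TopologicalSpace.GenerateOpen.basic _ ⟨S, rfl⟩

/-- Let `F` be finite, `2^F` carry the topology generated by the `B_S`, and
`W ⊆ 2^F` contain `∅`, with `{A ∈ W | A ⊆ S}` a chain for every `S ∉ W`.
The map `r` fixing `W` and sending `S ∉ W` to the maximum of the chain
`{A ∈ W | A ⊆ S}` (the element of maximal cardinality) is continuous as a map
to `W` with the subspace topology, and restricts to the identity on `W`. -/
theorem retraction_continuous (F : Type*) [Finite F] (W : Set (Set F))
    (hempty : ∅ ∈ W)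
    (hchain : ∀ S : Set F, S ∉ W → IsChain (· ⊆ ·) {A ∈ W | A ⊆ S})
    (r : Set F → Set F)
    (hmem : ∀ S : Set F, r S ∈ W)
    (hid : ∀ S ∈ W, r S = S)
    (hmax : ∀ S : Set F, S ∉ W → r S ⊆ S ∧ ∀ A ∈ W, A ⊆ S → A ⊆ r S) :
    (∀ S ∈ W, r S = S) ∧
    @Continuous (Set F) W (hyperTopology F)
      (@instTopologicalSpaceSubtype _ (· ∈ W) (hyperTopology F))
      (fun S => ⟨r S, hmem S⟩) := by
  refine ⟨hid, ?_⟩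
  -- r is monotone in a weak sense
  have hsub : ∀ S : Set F, r S ⊆ S := by
    intro S
    by_cases hS : S ∈ W
    · rw [hid S hS]
    · exact (hmax S hS).1
  have hmono : ∀ S T : Set F, S ⊆ T → r S ⊆ r T := by
    intro S T hST
    by_cases hT : T ∈ W
    · rw [hid T hT]; exact (hsub S).trans hST
    · exact (hmax T hT).2 (r S) (hmem S) ((hsub S).trans hST)
  letI : TopologicalSpace (Set F) := hyperTopology F
  apply Continuous.subtype_mk
  rw [hyperTopology, continuous_generateFrom_iff]
  rintro B ⟨A, rfl⟩
  apply upper_isOpen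
  intro S hS T hST
  exact Set.mem_setOf_eq ▸ (Set.mem_setOf_eq ▸ hS).trans (hmono S T hST)
end

section
/- Let F be a finite set with 2^F given the topology generated by B_S = {T | S ⊆ T}, and let W ⊆ 2^F be a subspace containing ∅ such that for each S ∉ W the set {A ∈ W | A ⊆ S} is a chain; let r : 2^F → W be the retraction sending S ∉ W to the maximum-cardinality element of {A ∈ W | A ⊆ S} and fixing W. Then the map H : 2^F × [0,1] → 2^F defined by H(S,t) = S for t < 1 and H(S,1) = r(S) is continuous, so W is a strong deformation retract of 2^F. -/
/-- Let `F` be finite, `2^F` carry the topology generated by the `B_S`,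
`W ⊆ 2^F` contain `∅` with `{A ∈ W | A ⊆ S}` a chain for `S ∉ W`, and let
`r` be the retraction onto `W` sending `S ∉ W` to the maximum of `{A ∈ W | A ⊆ S}`.
Then the homotopy `H(S,t) = S` for `t < 1`, `H(S,1) = r S` is continuous,
so `W` is a strong deformation retract of `2^F`. -/
theorem strong_deformation_retract (F : Type*) [Finite F] (W : Set (Set F))
    (hempty : ∅ ∈ W)
    (hchain : ∀ S : Set F, S ∉ W → IsChain (· ⊆ ·) {A ∈ W | A ⊆ S})
    (r : Set F → Set F)
    (hmem : ∀ S : Set F, r S ∈ W)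
    (hid : ∀ S ∈ W, r S = S)
    (hmax : ∀ S : Set F, S ∉ W → r S ⊆ S ∧ ∀ A ∈ W, A ⊆ S → A ⊆ r S)
    (H : Set F × unitInterval → Set F)
    (hH1 : ∀ S : Set F, ∀ t : unitInterval, t < 1 → H (S, t) = S)
    (hH2 : ∀ S : Set F, H (S, 1) = r S) :
    @Continuous (Set F × unitInterval) (Set F)
      (@instTopologicalSpaceProd _ _ (hyperTopology F) inferInstance)
      (hyperTopology F) H ∧
    (∀ S : Set F, H (S, 0) = S) ∧
    (∀ S : Set F, H (S, 1) ∈ W) ∧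
    (∀ S ∈ W, ∀ t : unitInterval, H (S, t) = S) := by
  have hrsub : ∀ S : Set F, r S ⊆ S := by
    intro S
    by_cases h : S ∈ W
    · rw [hid S h]
    · exact (hmax S h).1
  have hmono : ∀ S S' : Set F, r S ⊆ S' → r S ⊆ r S' := by
    intro S S' h
    by_cases h' : S' ∈ W
    · rw [hid S' h']; exact h
    · exact (hmax S' h').2 (r S) (hmem S) h
  refine ⟨?_, ?_, ?_, ?_⟩
  · letI : TopologicalSpace (Set F) := hyperTopology F
    have key : ∀ B ∈ {B | ∃ S : Set F, B = {T : Set F | S ⊆ T}},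
        IsOpen (H ⁻¹' B) := by
      rintro B ⟨A, rfl⟩
      have hset : H ⁻¹' {T : Set F | A ⊆ T} =
          ({S : Set F | A ⊆ S} ×ˢ {t : unitInterval | t < 1}) ∪
          ({S : Set F | A ⊆ r S} ×ˢ Set.univ) := by
        ext ⟨S, t⟩
        simp only [Set.mem_preimage, Set.mem_union, Set.mem_prod, Set.mem_setOf_eq,
          Set.mem_univ, and_true]
        constructor
        · intro hA
          rcases lt_or_eq_of_le t.2.2 with ht | ht
          · left
            have ht' : t < 1 := Subtype.coe_lt_coe.mp ht
            rw [hH1 S t ht'] at hA; exact ⟨hA, ht'⟩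
          · right
            have ht' : t = 1 := Subtype.ext ht
            rw [ht', hH2] at hA; exact hA
        · rintro (⟨hA, ht⟩ | hA)
          · rw [hH1 S t ht]; exact hA
          · rcases lt_or_eq_of_le t.2.2 with ht | ht
            · have ht' : t < 1 := Subtype.coe_lt_coe.mp ht
              rw [hH1 S t ht']; exact hA.trans (hrsub S)
            · have ht' : t = 1 := Subtype.ext ht
              rw [ht', hH2]; exact hA
      rw [hset]
      apply IsOpen.union
      · apply IsOpen.prod
        · exact TopologicalSpace.GenerateOpen.basic _ ⟨A, rfl⟩
        · have : {t : unitInterval | t < 1} = Set.Iio 1 := rfl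
          rw [this]; exact isOpen_Iio
      · apply IsOpen.prod
        · have hU : {S : Set F | A ⊆ r S} =
              ⋃ S₀ ∈ {S : Set F | A ⊆ r S}, {T : Set F | r S₀ ⊆ T} := by
            ext S
            simp only [Set.mem_setOf_eq, Set.mem_iUnion]
            constructor
            · intro h
              exact ⟨S, h, hrsub S⟩
            · rintro ⟨S₀, h₀, hsub⟩
              exact h₀.trans (hmono S₀ S hsub)
          rw [hU]
          exact isOpen_biUnion fun S₀ _ =>
            TopologicalSpace.GenerateOpen.basic _ ⟨r S₀, rfl⟩
        · exact isOpen_univ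
    exact continuous_generateFrom_iff.mpr key
  · intro S
    exact hH1 S 0 (by norm_num [← Subtype.coe_lt_coe])
  · intro S
    rw [hH2]; exact hmem S
  · intro S hS t
    rcases lt_or_eq_of_le t.2.2 with ht | ht
    · exact hH1 S t (Subtype.coe_lt_coe.mp ht)
    · have ht' : t = 1 := Subtype.ext ht
      rw [ht', hH2, hid S hS]
end

section
/- Let M be a topological space and H : M × [0,1] → M × [0,1] a level-preserving homeomorphism (an isotopy), writing H(x,t) = (H_t x, t). If M is a finite T0 space with its specialization order, and M × [0,1] is ordered by (x₁,t₁) ≤ (x₂,t₂) iff x₁ ≤ x₂ and t₁ ≤ t₂, then H is order preserving: (x₁,t₁) ≤ (x₂,t₂) implies H(x₁,t₁) ≤ H(x₂,t₂). -/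
/-- The specialization order on a space: `x ≤ y` iff `x` lies in every open set
containing `y`. -/
def specLe {M : Type*} [TopologicalSpace M] (x y : M) : Prop :=
  ∀ U : Set M, IsOpen U → y ∈ U → x ∈ U

section Aux

variable {M : Type*} [TopologicalSpace M]

lemma specLe_refl (x : M) : specLe x x := fun _ _ h => h

lemma specLe_trans {x y z : M} (h1 : specLe x y) (h2 : specLe y z) : specLe x z :=
  fun U hU hz => h1 U hU (h2 U hU hz)

lemma specLe_antisymm [T0Space M] {x y : M} (h1 : specLe x y) (h2 : specLe y x) : x = y := by
  have hs : x ⤳ y := specializes_iff_forall_open.2 h1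
  have hs' : y ⤳ x := specializes_iff_forall_open.2 h2
  exact (hs.antisymm hs').eq

lemma Continuous.specLe {N : Type*} [TopologicalSpace N] {f : M → N} (hf : Continuous f)
    {x y : M} (h : specLe x y) : specLe (f x) (f y) :=
  fun U hU hy => h (f ⁻¹' U) (hU.preimage hf) hy

/-- minimal open set around a point of a finite space -/
lemma isOpen_specLe_set [Finite M] (p : M) : IsOpen {y : M | specLe y p} := by
  have : {y : M | specLe y p} = ⋂₀ {U : Set M | IsOpen U ∧ p ∈ U} := by
    ext y
    simp only [Set.mem_setOf_eq, Set.mem_sInter]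
    exact ⟨fun h U hU => h U hU.1 hU.2, fun h U hU hp => h U ⟨hU, hp⟩⟩
  rw [this]
  exact Set.Finite.isOpen_sInter (Set.toFinite _) (fun U hU => hU.1)

/-- A bijection of a finite T0 space that moves every point down is the identity. -/
lemma perm_eq_id_of_specLe [Finite M] [T0Space M]
    (e : M ≃ M) (h : ∀ x, specLe (e x) x) (x : M) : e x = x := by
  -- chains of iterates
  have key : ∀ k : ℕ, specLe (e^[k + 1] x) (e x) := by
    intro k
    induction k with
    | zero => exact specLe_refl _
    | succ k ih =>
      have : (⇑e)^[k + 1 + 1] x = e ((⇑e)^[k + 1] x) := Function.iterate_succ_apply' _ _ _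
      rw [this]
      exact specLe_trans (h _) ih
  -- pigeonhole: some iterate returns to x
  obtain ⟨i, j, hij, hval⟩ :
      ∃ i j : ℕ, i ≠ j ∧ (⇑e)^[i] x = (⇑e)^[j] x :=
    Finite.exists_ne_map_eq_of_infinite (fun n : ℕ => (⇑e)^[n] x)
  wlog hlt : i < j generalizing i j
  · exact this j i (Ne.symm hij) hval.symm (by omega)
  have hinj : Function.Injective ((⇑e)^[i]) := e.injective.iterate i
  have hret : (⇑e)^[j - i] x = x := by
    apply hinj
    rw [← Function.iterate_add_apply]
    have : i + (j - i) = j := by omega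
    rw [this, ← hval]
  have hm : j - i - 1 + 1 = j - i := by omega
  have : specLe x (e x) := by
    have := key (j - i - 1)
    rwa [hm, hret] at this
  exact specLe_antisymm (h x) this

end Aux

/-- Let `M` be a finite `T0` space and `H` an isotopy of `M`, i.e. a level-preserving
self-homeomorphism of `M × [0,1]`. Then `H` is order preserving for the product order,
where `M` carries the specialization order: `(x₁,t₁) ≤ (x₂,t₂)` implies
`H(x₁,t₁) ≤ H(x₂,t₂)`. -/
theorem isotopy_order_preserving (M : Type*) [TopologicalSpace M] [Finite M] [T0Space M]
    (H : M × unitInterval ≃ₜ M × unitInterval)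
    (hlevel : ∀ x : M, ∀ t : unitInterval, (H (x, t)).2 = t) :
    ∀ x₁ x₂ : M, ∀ t₁ t₂ : unitInterval,
      specLe x₁ x₂ → t₁ ≤ t₂ →
      specLe (H (x₁, t₁)).1 (H (x₂, t₂)).1 ∧ (H (x₁, t₁)).2 ≤ (H (x₂, t₂)).2 := by
  -- notation: G t x = H_t x, Ψ t y = H_t⁻¹ y
  set G : unitInterval → M → M := fun t x => (H (x, t)).1 with hG
  set Ψ : unitInterval → M → M := fun t y => (H.symm (y, t)).1 with hΨ
  have hlevel' : ∀ y : M, ∀ t : unitInterval, (H.symm (y, t)).2 = t := by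
    intro y t
    have : H (H.symm (y, t)) = (y, t) := H.apply_symm_apply _
    calc (H.symm (y, t)).2 = (H ((H.symm (y, t)).1, (H.symm (y, t)).2)).2 :=
          (hlevel _ _).symm
      _ = t := by rw [Prod.mk.eta, this]
  have hΨG : ∀ t x, Ψ t (G t x) = x := by
    intro t x
    have h1 : ((H (x, t)).1, t) = H (x, t) := Prod.ext rfl (hlevel x t).symm
    simp only [hΨ, hG, h1, H.symm_apply_apply]
  have hGΨ : ∀ t y, G t (Ψ t y) = y := by
    intro t y
    have h1 : ((H.symm (y, t)).1, t) = H.symm (y, t) := Prod.ext rfl (hlevel' y t).symm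
    simp only [hG, hΨ, h1, H.apply_symm_apply]
  have hGc : ∀ t, Continuous (G t) := fun t =>
    continuous_fst.comp (H.continuous.comp (Continuous.prodMk_left t))
  have hΨc : ∀ t, Continuous (Ψ t) := fun t =>
    continuous_fst.comp (H.symm.continuous.comp (Continuous.prodMk_left t))
  -- G is locally constant in t
  have hLC : IsLocallyConstant G := by
    rw [IsLocallyConstant.iff_exists_open]
    intro t₀
    refine ⟨⋂ x : M, (fun t => G t x) ⁻¹' {y | specLe y (G t₀ x)}, ?_, ?_, ?_⟩
    · refine isOpen_iInter_of_finite fun x => ?_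
      exact (isOpen_specLe_set (G t₀ x)).preimage
        (continuous_fst.comp (H.continuous.comp (Continuous.prodMk_right x)))
    · exact Set.mem_iInter.2 fun x => specLe_refl _
    · intro t ht
      have hdown : ∀ x, specLe (G t x) (G t₀ x) := by
        intro x
        exact Set.mem_iInter.1 ht x
      -- the bijection Ψ t₀ ∘ G t moves every point down, so it is the identity
      have hbij : Function.Bijective (fun x => Ψ t₀ (G t x)) := by
        refine ⟨fun a b hab => ?_, fun y => ⟨Ψ t (G t₀ y), ?_⟩⟩
        · have := congrArg (G t₀) hab
          simp only [hGΨ] at this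
          have := congrArg (Ψ t) this
          simpa only [hΨG] using this
        · simp only [hGΨ, hΨG]
      have hid : ∀ x, Ψ t₀ (G t x) = x := by
        apply perm_eq_id_of_specLe (Equiv.ofBijective _ hbij)
        intro x
        have h1 : specLe (Ψ t₀ (G t x)) (Ψ t₀ (G t₀ x)) := (hΨc t₀).specLe (hdown x)
        rwa [hΨG] at h1
      funext x
      have := congrArg (G t₀) (hid x)
      rwa [hGΨ] at this
  intro x₁ x₂ t₁ t₂ hx ht
  constructor
  · have hGeq : G t₁ = G t₂ := hLC.apply_eq_of_preconnectedSpace t₁ t₂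
    have : specLe (G t₂ x₁) (G t₂ x₂) := (hGc t₂).specLe hx
    show specLe (G t₁ x₁) (G t₂ x₂)
    rwa [hGeq]
  · rw [hlevel, hlevel]; exact ht
end

section
/- Let X be a compact metric space, I_X the directed set of finite open covers W_n = ⋃_{i=1}^n U_i with U_i a finite cover of X by balls of radius 1/i, and for α ≤ α′ in I_X let f_α^{α′} : X_{α′} → X_α be the induced maps on quotient classes. If (E_α)_{α ∈ I_X} is a thread, i.e., f_α^{α′}(E_{α′}) = E_α whenever α ≤ α′, then the intersection ⋂_{α ∈ I_X} closure(E_α) (closures in X) is nonempty and consists of exactly one point of X. -/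
/-- The cover `W_n = ⋃_{i ≤ n} 𝒰_i` built from a family of covers `𝒰`. -/
def coverW {X : Type*} (𝒰 : ℕ → Set (Set X)) (n : ℕ) : Set (Set X) :=
  {U | ∃ i ≤ n, U ∈ 𝒰 i}

/-- The minimal cover set `U_x^α = ⋂ {U ∈ α | x ∈ U}`. -/
def minU {X : Type*} (α : Set (Set X)) (x : X) : Set X := ⋂₀ {U | U ∈ α ∧ x ∈ U}

/-- The quotient set `X_α` of classes of the relation `U_x^α = U_y^α`; a class is
determined by (and identified with) the common minimal cover set of its points. -/
def Qspace {X : Type*} (α : Set (Set X)) : Type _ := ↥(Set.range (minU α))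

/-- The class of a point `x` in `X_α`. -/
def qmk {X : Type*} (α : Set (Set X)) (x : X) : Qspace α := ⟨minU α x, ⟨x, rfl⟩⟩

/-- A class `E ∈ X_α`, viewed as the subset `{x | U_x^α = E}` of `X`. -/
def qcls {X : Type*} (α : Set (Set X)) (E : Qspace α) : Set X := {x | minU α x = E.1}

/-- The canonical projection `X_{α'} → X_α` (for `α ⊆ α'`) sending the class of `x`
to the class of `x`. -/
noncomputable def qproj {X : Type*} (α α' : Set (Set X)) (E : Qspace α') : Qspace α :=
  qmk α E.2.choose

lemma mem_minU' {X : Type*} (α : Set (Set X)) (x : X) : x ∈ minU α x := by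
  intro U hU; exact hU.2

lemma minU_eq_of_subset' {X : Type*} {α α' : Set (Set X)} (h : α ⊆ α') {x y : X}
    (hxy : minU α' x = minU α' y) : minU α x = minU α y := by
  have key : ∀ U ∈ α', (x ∈ U ↔ y ∈ U) := by
    intro U hU
    constructor
    · intro hx
      have h1 : minU α' x ⊆ U := Set.sInter_subset_of_mem ⟨hU, hx⟩
      exact h1 (hxy ▸ mem_minU' α' y)
    · intro hy
      have h1 : minU α' y ⊆ U := Set.sInter_subset_of_mem ⟨hU, hy⟩
      exact h1 (hxy ▸ mem_minU' α' x)
  have hset : {U | U ∈ α ∧ x ∈ U} = {U | U ∈ α ∧ y ∈ U} := by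
    ext U
    exact and_congr_right fun hU => key U (h hU)
  unfold minU
  rw [hset]

lemma coverW_mono' {X : Type*} (𝒰 : ℕ → Set (Set X)) {n n' : ℕ} (h : n ≤ n') :
    coverW 𝒰 n ⊆ coverW 𝒰 n' := fun U ⟨i, hi, hU⟩ => ⟨i, hi.trans h, hU⟩

/-- Let `X` be a compact metric space and `W_n = ⋃_{i ≤ n} 𝒰_i` the covers built from
finite covers `𝒰_i` of `X` by open balls of radius `1/(i+1)`. If `(E_n)_n` is a
thread, i.e. `f_n^{n'}(E_{n'}) = E_n` for `n ≤ n'`, then `⋂_n closure (E_n)` contains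
exactly one point of `X`. -/
theorem thread_intersection_singleton (X : Type*) [MetricSpace X] [CompactSpace X]
    (𝒰 : ℕ → Set (Set X))
    (h𝒰fin : ∀ n, (𝒰 n).Finite)
    (h𝒰ball : ∀ n, ∀ U ∈ 𝒰 n, ∃ c : X, U = Metric.ball c (1 / (n + 1)))
    (h𝒰cov : ∀ n, ∀ x : X, ∃ U ∈ 𝒰 n, x ∈ U)
    (E : (n : ℕ) → Qspace (coverW 𝒰 n))
    (hthread : ∀ n n' : ℕ, n ≤ n' →
      qproj (coverW 𝒰 n) (coverW 𝒰 n') (E n') = E n) :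
    ∃! x : X, x ∈ ⋂ n : ℕ, closure (qcls (coverW 𝒰 n) (E n)) := by
  set D : ℕ → Set X := fun n => qcls (coverW 𝒰 n) (E n) with hD
  -- nonemptiness
  have hne : ∀ n, (D n).Nonempty := by
    intro n
    obtain ⟨y, hy⟩ := (E n).2
    exact ⟨y, hy⟩
  -- antitone
  have hanti : ∀ n n', n ≤ n' → D n' ⊆ D n := by
    intro n n' hle x hx
    have ht := hthread n n' hle
    set y := (E n').2.choose with hy'
    have hy : minU (coverW 𝒰 n') y = (E n').1 := (E n').2.choose_spec
    have h1 : minU (coverW 𝒰 n) y = (E n).1 := congrArg Subtype.val ht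
    have h2 : minU (coverW 𝒰 n') x = minU (coverW 𝒰 n') y := by
      rw [hy]; exact hx
    have h3 := minU_eq_of_subset' (coverW_mono' 𝒰 hle) h2
    show minU (coverW 𝒰 n) x = (E n).1
    rw [h3, h1]
  -- diameter bound
  have hdist : ∀ n, ∀ a ∈ D n, ∀ b ∈ D n, dist a b ≤ 2 / (n + 1) := by
    intro n a ha b hb
    obtain ⟨U, hU, haU⟩ := h𝒰cov n a
    have hUW : U ∈ coverW 𝒰 n := ⟨n, le_refl n, hU⟩
    obtain ⟨c, hc⟩ := h𝒰ball n U hU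
    have hab : minU (coverW 𝒰 n) a = minU (coverW 𝒰 n) b := by
      have ha' : minU (coverW 𝒰 n) a = (E n).1 := ha
      have hb' : minU (coverW 𝒰 n) b = (E n).1 := hb
      rw [ha', hb']
    have hbU : b ∈ U := by
      have h1 : minU (coverW 𝒰 n) a ⊆ U := Set.sInter_subset_of_mem ⟨hUW, haU⟩
      exact h1 (hab ▸ mem_minU' (coverW 𝒰 n) b)
    rw [hc] at haU hbU
    simp only [Metric.mem_ball] at haU hbU
    calc dist a b ≤ dist a c + dist c b := dist_triangle a c b
    _ = dist a c + dist b c := by rw [dist_comm c b]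
    _ ≤ 1 / (n+1) + 1 / (n+1) := by linarith
    _ = 2 / (n+1) := by ring
  have hdistcl : ∀ n, ∀ a ∈ closure (D n), ∀ b ∈ closure (D n), dist a b ≤ 2 / (n + 1) := by
    intro n a ha b hb
    have hbdd : Bornology.IsBounded (D n) := Metric.isBounded_of_compactSpace
    have hdiam : Metric.diam (D n) ≤ 2 / (n + 1) :=
      Metric.diam_le_of_forall_dist_le (by positivity) (hdist n)
    have h := Metric.dist_le_diam_of_mem (hbdd.closure) ha hb
    rw [Metric.diam_closure] at h
    linarith
  -- existence
  have hex : (⋂ n, closure (D n)).Nonempty := by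
    apply IsCompact.nonempty_iInter_of_sequence_nonempty_isCompact_isClosed
    · intro n; exact closure_mono (hanti n (n+1) (Nat.le_succ n))
    · intro n; exact (hne n).closure
    · exact (isClosed_closure).isCompact
    · intro n; exact isClosed_closure
  obtain ⟨x, hx⟩ := hex
  refine ⟨x, hx, ?_⟩
  intro y hy
  have hd0 : dist y x = 0 := by
    by_contra hne0
    have hpos : 0 < dist y x := lt_of_le_of_ne dist_nonneg (Ne.symm hne0)
    obtain ⟨n, hn⟩ := exists_nat_one_div_lt (by positivity : (0:ℝ) < dist y x / 2)
    have h1 := hdistcl n y (Set.mem_iInter.1 hy n) x (Set.mem_iInter.1 hx n)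
    have : (2:ℝ) / (n+1) = 2 * (1 / (n+1)) := by ring
    rw [this] at h1
    linarith
  exact dist_eq_zero.1 hd0
end
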